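/- arXiv:0902.1189 — 5 statements merged into one kernel-verified Lean document; each statement's English description precedes it below -/
import Mathlib

section
/- Let A : X ⇉ X* be a monotone linear relation. Then the function g : X × X* → (−∞,+∞], g(x,x*) = ⟨x, x*⟩ + ι_{gra A}(x,x*) (equal to ⟨x,x*⟩ on gra A and +∞ elsewhere), is convex. -/
/-!
On `gra A` the function `g` is the pairing `⟨x, x*⟩`, and off it `g = ⊤`. The pairing obeys
`⟨λp + (1-λ)q⟩ = λ⟨p⟩ + (1-λ)⟨q⟩ - λ(1-λ)⟨p - q⟩`, and monotonicity says `⟨p - q⟩ ≥ 0`, so the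
pairing is convex on the convex set `gra A`; extending a convex function by `⊤` off a convex set
keeps it convex.
-/

section Pairing

variable {E : Type*} [AddCommGroup E] [Module ℝ E] [TopologicalSpace E]

theorem pairing_convexCombination (p q : E × (E →L[ℝ] ℝ)) {a b : ℝ} (hab : a + b = 1) :
    (a • p + b • q).2 (a • p + b • q).1
      = a * p.2 p.1 + b * q.2 q.1 - a * b * (p - q).2 (p - q).1 := by
  simp only [Prod.fst_add, Prod.snd_add, Prod.smul_fst, Prod.smul_snd, Prod.fst_sub,
    Prod.snd_sub, map_add, map_smul, map_sub, add_apply, smul_apply,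
    sub_apply, smul_eq_mul]
  linear_combination (a * p.2 p.1 + b * q.2 q.1) * hab

theorem convexOn_pairing_of_monotone {s : Set (E × (E →L[ℝ] ℝ))} (hs : Convex ℝ s)
    (hmono : ∀ p ∈ s, ∀ q ∈ s, 0 ≤ (p.2 - q.2) (p.1 - q.1)) :
    ConvexOn ℝ s fun p => p.2 p.1 := by
  refine ⟨hs, fun p hp q hq a b ha hb hab => ?_⟩
  have hpq : 0 ≤ (p - q).2 (p - q).1 := hmono p hp q hq
  simp only [pairing_convexCombination p q hab, smul_eq_mul]
  linarith [mul_nonneg (mul_nonneg ha hb) hpq]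

end Pairing

open Classical in
noncomputable def extendByTop {E : Type*} (s : Set E) (f : E → ℝ) (x : E) : EReal :=
  if x ∈ s then f x else ⊤

section ExtendByTop

variable {E : Type*} {s : Set E} {f : E → ℝ}

theorem extendByTop_of_notMem {x : E} (hx : x ∉ s) : extendByTop s f x = ⊤ := if_neg hx

theorem coe_mul_extendByTop_ne_bot {a : ℝ} (ha : 0 ≤ a) (x : E) :
    (a : EReal) * extendByTop s f x ≠ ⊥ := by
  rcases ha.eq_or_lt with rfl | ha
  · simp
  unfold extendByTop; split
  · exact_mod_cast EReal.coe_ne_bot _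
  · simp [EReal.coe_mul_top_of_pos ha]

theorem coe_mul_extendByTop_of_notMem {a : ℝ} (ha : 0 < a) {x : E} (hx : x ∉ s) :
    (a : EReal) * extendByTop s f x = ⊤ := by
  rw [extendByTop_of_notMem hx, EReal.coe_mul_top_of_pos ha]

theorem ConvexOn.extendByTop_le [AddCommGroup E] [Module ℝ E] (hf : ConvexOn ℝ s f) (x y : E)
    {a : ℝ} (ha₀ : 0 ≤ a) (ha₁ : a ≤ 1) :
    extendByTop s f (a • x + (1 - a) • y)
      ≤ (a : EReal) * extendByTop s f x + ((1 - a : ℝ) : EReal) * extendByTop s f y := by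
  have hb₀ : 0 ≤ 1 - a := sub_nonneg.2 ha₁
  by_cases hx : x ∈ s
  · by_cases hy : y ∈ s
    · have hmem := hf.1 hx hy ha₀ hb₀ (by ring)
      simp only [extendByTop, if_pos hx, if_pos hy, if_pos hmem]
      exact_mod_cast hf.2 hx hy ha₀ hb₀ (by ring)
    rcases ha₁.eq_or_lt with rfl | ha₁
    · simp
    rw [coe_mul_extendByTop_of_notMem (sub_pos.2 ha₁) hy,
      EReal.add_top_of_ne_bot (coe_mul_extendByTop_ne_bot ha₀ x)]
    exact le_top
  rcases ha₀.eq_or_lt with rfl | ha₀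
  · simp
  rw [coe_mul_extendByTop_of_notMem ha₀ hx,
    EReal.top_add_of_ne_bot (coe_mul_extendByTop_ne_bot hb₀ y)]
  exact le_top

end ExtendByTop

open Classical in
theorem stmt_4_general {X : Type*} [NormedAddCommGroup X] [NormedSpace ℝ X]
    (G : Submodule ℝ (X × (X →L[ℝ] ℝ)))
    (hmono : ∀ p ∈ G, ∀ q ∈ G, 0 ≤ (p.2 - q.2) (p.1 - q.1))
    (g : X × (X →L[ℝ] ℝ) → EReal)
    (hg : ∀ p, g p = if p ∈ G then ((p.2 p.1 : ℝ) : EReal) else ⊤) :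
    ∀ p q : X × (X →L[ℝ] ℝ), ∀ lam ∈ Set.Icc (0:ℝ) 1,
      g (lam • p + (1 - lam) • q) ≤ (lam : EReal) * g p + ((1 - lam : ℝ) : EReal) * g q := by
  intro p q lam ⟨h₀, h₁⟩
  obtain rfl : g = extendByTop G fun p => p.2 p.1 := funext hg
  exact (convexOn_pairing_of_monotone G.convex hmono).extendByTop_le p q h₀ h₁

open Classical in
/-- For a monotone linear relation with graph `G`, the function
`g(x,x*) = ⟨x,x*⟩ + ι_G(x,x*)` is convex. -/
theorem stmt_4 {X : Type*} [NormedAddCommGroup X] [NormedSpace ℝ X] [CompleteSpace X]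
    (G : Submodule ℝ (X × (X →L[ℝ] ℝ)))
    (hmono : ∀ p ∈ G, ∀ q ∈ G, 0 ≤ (p.2 - q.2) (p.1 - q.1))
    (g : X × (X →L[ℝ] ℝ) → EReal)
    (hg : ∀ p, g p = if p ∈ G then ((p.2 p.1 : ℝ) : EReal) else ⊤) :
    ∀ p q : X × (X →L[ℝ] ℝ), ∀ lam ∈ Set.Icc (0:ℝ) 1,
      g (lam • p + (1 - lam) • q) ≤ (lam : EReal) * g p + ((1 - lam : ℝ) : EReal) * g q :=
  stmt_4_general G hmono g hg
end

section
/- Let A : X ⇉ X* be maximal monotone. Then the closed span of the projection onto X of the domain of the Fitzpatrick function F_A equals the closed span of dom A, i.e., cl span(P_X dom F_A) = cl span(dom A). -/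
/-!
If `x` lies outside the closed span `Y` of `dom A`, Hahn–Banach gives a functional `f` vanishing
on `Y` with `f x > 0`. Adding multiples of `f` to the second coordinate does not change the
pairing `⟨a - b, a* - b*⟩` of graph points, so by maximality `(a, a* + t f) ∈ gra A` for every
`t`, and these points drive `F_A(x, x*)` to `+∞`. Conversely, monotonicity gives
`F_A(a, a*) ≤ ⟨a, a*⟩` on the graph, so `dom A ⊆ P_X dom F_A`.
-/

open Set

lemma Submodule.exists_dual_eq_zero_pos_of_notMem {E : Type*} [AddCommGroup E] [Module ℝ E]
    [TopologicalSpace E] [IsTopologicalAddGroup E] [ContinuousSMul ℝ E]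
    [LocallyConvexSpace ℝ E] {Y : Submodule ℝ E} (hY : IsClosed (Y : Set E)) {x : E}
    (hx : x ∉ Y) : ∃ f : E →L[ℝ] ℝ, (∀ y ∈ Y, f y = 0) ∧ 0 < f x := by
  obtain ⟨f, u, hfY, hux⟩ := geometric_hahn_banach_closed_point Y.convex hY hx
  have hu : 0 < u := by simpa using hfY 0 Y.zero_mem
  refine ⟨f, fun y hy => ?_, hu.trans hux⟩
  by_contra hfy
  -- `f` is bounded above by `u` on the line through `y`, so it must vanish there.
  have h := hfY (((u + 1) / f y) • y) (Y.smul_mem _ hy)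
  rw [map_smul, smul_eq_mul, div_mul_cancel₀ _ hfy] at h
  linarith

section Fitzpatrick

variable {X : Type*} [NormedAddCommGroup X] [NormedSpace ℝ X]

noncomputable def fitzpatrick (G : Set (X × (X →L[ℝ] ℝ))) (p : X × (X →L[ℝ] ℝ)) : EReal :=
  sSup {r : EReal | ∃ q ∈ G, r = ((q.2 p.1 + p.2 q.1 - q.2 q.1 : ℝ) : EReal)}

variable {G : Set (X × (X →L[ℝ] ℝ))}

lemma fitzpatrick_le_of_mem (hmono : ∀ p ∈ G, ∀ q ∈ G, 0 ≤ (p.2 - q.2) (p.1 - q.1))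
    {p : X × (X →L[ℝ] ℝ)} (hp : p ∈ G) : fitzpatrick G p ≤ p.2 p.1 := by
  refine sSup_le ?_
  rintro r ⟨q, hq, rfl⟩
  have h := hmono p hp q hq
  simp only [sub_apply, map_sub] at h
  exact EReal.coe_le_coe_iff.2 (by linarith)

lemma nonempty_of_maximal
    (hmax : ∀ p : X × (X →L[ℝ] ℝ), (∀ q ∈ G, 0 ≤ (p.2 - q.2) (p.1 - q.1)) → p ∈ G) :
    G.Nonempty := by
  rcases G.eq_empty_or_nonempty with hG | hG
  · exact ⟨0, hmax 0 (by simp [hG])⟩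
  · exact hG

lemma add_smul_mem_of_forall_eq_zero (hmono : ∀ p ∈ G, ∀ q ∈ G, 0 ≤ (p.2 - q.2) (p.1 - q.1))
    (hmax : ∀ p : X × (X →L[ℝ] ℝ), (∀ q ∈ G, 0 ≤ (p.2 - q.2) (p.1 - q.1)) → p ∈ G)
    {f : X →L[ℝ] ℝ} (hf : ∀ q ∈ G, f q.1 = 0) {p : X × (X →L[ℝ] ℝ)} (hp : p ∈ G) (t : ℝ) :
    (p.1, p.2 + t • f) ∈ G := by
  refine hmax _ fun q hq => ?_
  have h := hmono p hp q hq
  simp only [sub_apply, add_apply,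
    smul_apply, map_sub, smul_eq_mul] at h ⊢
  rw [hf p hp, hf q hq]
  linarith

lemma fitzpatrick_eq_top_of_forall_eq_zero
    (hmono : ∀ p ∈ G, ∀ q ∈ G, 0 ≤ (p.2 - q.2) (p.1 - q.1))
    (hmax : ∀ p : X × (X →L[ℝ] ℝ), (∀ q ∈ G, 0 ≤ (p.2 - q.2) (p.1 - q.1)) → p ∈ G)
    {f : X →L[ℝ] ℝ} (hf : ∀ q ∈ G, f q.1 = 0) {p : X × (X →L[ℝ] ℝ)} (hfp : 0 < f p.1) :
    fitzpatrick G p = ⊤ := by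
  obtain ⟨a, ha⟩ := nonempty_of_maximal hmax
  refine (EReal.eq_top_iff_forall_lt _).2 fun R => ?_
  set c : ℝ := a.2 p.1 + p.2 a.1 - a.2 a.1
  set t : ℝ := (R + 1 - c) / f p.1
  have hval : (a.2 + t • f) p.1 + p.2 a.1 - (a.2 + t • f) a.1 = R + 1 := by
    simp only [add_apply, smul_apply, smul_eq_mul,
      hf a ha, mul_zero, add_zero, t, div_mul_cancel₀ _ hfp.ne', c]
    ring
  calc (R : EReal) < ((R + 1 : ℝ) : EReal) := EReal.coe_lt_coe_iff.2 (lt_add_one R)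
    _ ≤ fitzpatrick G p :=
      le_sSup ⟨(a.1, a.2 + t • f), add_smul_mem_of_forall_eq_zero hmono hmax hf ha t, by
        rw [hval]⟩

lemma fst_mem_closure_span_of_fitzpatrick_lt_top
    (hmono : ∀ p ∈ G, ∀ q ∈ G, 0 ≤ (p.2 - q.2) (p.1 - q.1))
    (hmax : ∀ p : X × (X →L[ℝ] ℝ), (∀ q ∈ G, 0 ≤ (p.2 - q.2) (p.1 - q.1)) → p ∈ G)
    {p : X × (X →L[ℝ] ℝ)} (hp : fitzpatrick G p < ⊤) :
    p.1 ∈ (Submodule.span ℝ {x : X | ∃ xstar, (x, xstar) ∈ G}).topologicalClosure := by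
  set Y := (Submodule.span ℝ {x : X | ∃ xstar, (x, xstar) ∈ G}).topologicalClosure
  by_contra hpY
  obtain ⟨f, hfY, hfp⟩ :=
    Submodule.exists_dual_eq_zero_pos_of_notMem (Submodule.isClosed_topologicalClosure _) hpY
  have hf : ∀ q ∈ G, f q.1 = 0 := fun q hq =>
    hfY _ (Submodule.le_topologicalClosure _ (Submodule.subset_span ⟨q.2, hq⟩))
  exact hp.ne (fitzpatrick_eq_top_of_forall_eq_zero hmono hmax hf hfp)

end Fitzpatrick

theorem stmt_7_general {X : Type*} [NormedAddCommGroup X] [NormedSpace ℝ X]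
    (G : Set (X × (X →L[ℝ] ℝ)))
    (hmono : ∀ p ∈ G, ∀ q ∈ G, 0 ≤ (p.2 - q.2) (p.1 - q.1))
    (hmax : ∀ p : X × (X →L[ℝ] ℝ), (∀ q ∈ G, 0 ≤ (p.2 - q.2) (p.1 - q.1)) → p ∈ G)
    (F : X × (X →L[ℝ] ℝ) → EReal)
    (hF : ∀ p, F p = sSup {r : EReal |
      ∃ q ∈ G, r = ((q.2 p.1 + p.2 q.1 - q.2 q.1 : ℝ) : EReal)}) :
    closure (Submodule.span ℝ (Prod.fst '' {p : X × (X →L[ℝ] ℝ) | F p < ⊤}) : Set X)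
      = closure (Submodule.span ℝ {x : X | ∃ xstar, (x, xstar) ∈ G} : Set X) := by
  obtain rfl : F = fitzpatrick G := funext hF
  refine Subset.antisymm ?_ (closure_mono (Submodule.span_mono ?_))
  · refine closure_minimal ?_ isClosed_closure
    change _ ≤ (Submodule.span ℝ {x : X | ∃ xstar, (x, xstar) ∈ G}).topologicalClosure
    refine Submodule.span_le.2 ?_
    rintro _ ⟨p, hp, rfl⟩
    exact fst_mem_closure_span_of_fitzpatrick_lt_top hmono hmax hp
  · rintro a ⟨astar, ha⟩
    exact ⟨(a, astar), (fitzpatrick_le_of_mem hmono ha).trans_lt (EReal.coe_lt_top _), rfl⟩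

/-- Simons: for maximal monotone `A` with graph `G`,
`cl span (P_X dom F_A) = cl span (dom A)`. -/
theorem stmt_7 {X : Type*} [NormedAddCommGroup X] [NormedSpace ℝ X] [CompleteSpace X]
    (G : Set (X × (X →L[ℝ] ℝ)))
    (hmono : ∀ p ∈ G, ∀ q ∈ G, 0 ≤ (p.2 - q.2) (p.1 - q.1))
    (hmax : ∀ p : X × (X →L[ℝ] ℝ), (∀ q ∈ G, 0 ≤ (p.2 - q.2) (p.1 - q.1)) → p ∈ G)
    (F : X × (X →L[ℝ] ℝ) → EReal)
    (hF : ∀ p, F p = sSup {r : EReal |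
      ∃ q ∈ G, r = ((q.2 p.1 + p.2 q.1 - q.2 q.1 : ℝ) : EReal)}) :
    closure (Submodule.span ℝ (Prod.fst '' {p : X × (X →L[ℝ] ℝ) | F p < ⊤}) : Set X)
      = closure (Submodule.span ℝ {x : X | ∃ xstar, (x, xstar) ∈ G} : Set X) :=
  stmt_7_general G hmono hmax F hF
end

section
/- Let A : X ⇉ X* be a set-valued operator, C ⊆ X nonempty closed convex, and (z, z*) ∈ X × X*. Define I_C(x) = {0} if x ∈ C and ∅ otherwise, and for a ∈ C let T_C(a) = {x ∈ X : ⟨x, a*⟩ ≤ 0 for all a* ∈ N_C(a)}. Then (z,z*) is monotonically related to gra(A + N_C) if and only if (z,z*) is monotonically related to gra(A + I_C) and z ∈ a + T_C(a) for every a ∈ dom A ∩ C. -/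
/-!
Testing against the pairs `(y, a* + 0)` with `y ∈ C` gives the relation to `gra (A + I_C)`.
For `a ∈ dom A ∩ C` and `n* ∈ N_C(a)`, testing against `(a, a* + t n*)` for all `t ≥ 0` bounds
`t ⟨z - a, n*⟩` from above; since `N_C(a)` is a cone this forces `⟨z - a, n*⟩ ≤ 0`, i.e.
`z - a ∈ T_C(a)`. Conversely `⟨z - y, n*⟩ ≤ 0` for `n* ∈ N_C(y)` is exactly what is lost when
`0 ∈ I_C(y)` is replaced by `n*`.
-/

theorem LinearMap.nonpos_of_le_of_smul_mem {E : Type*} [AddCommGroup E] [Module ℝ E]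
    {K : Set E} (hK : ∀ t : ℝ, 0 ≤ t → ∀ x ∈ K, t • x ∈ K) (f : E →ₗ[ℝ] ℝ) {c : ℝ}
    (hf : ∀ x ∈ K, f x ≤ c) {x : E} (hx : x ∈ K) : f x ≤ 0 := by
  by_contra! hpos
  have hbound := hf _ (hK ((|c| + 1) / f x) (by positivity) x hx)
  rw [map_smul, smul_eq_mul, div_mul_cancel₀ _ hpos.ne'] at hbound
  linarith [le_abs_self c]

section NormalCone

variable {X : Type*} [NormedAddCommGroup X] [NormedSpace ℝ X] {C : Set X} {x : X}
  {n : X →L[ℝ] ℝ}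

open Classical in
def normalCone (C : Set X) (x : X) : Set (X →L[ℝ] ℝ) :=
  if x ∈ C then {xstar | ∀ c ∈ C, xstar (c - x) ≤ 0} else ∅

theorem mem_normalCone : n ∈ normalCone C x ↔ x ∈ C ∧ ∀ c ∈ C, n (c - x) ≤ 0 := by
  unfold normalCone
  split_ifs with hx <;> simp [hx]

theorem zero_mem_normalCone (hx : x ∈ C) : (0 : X →L[ℝ] ℝ) ∈ normalCone C x :=
  mem_normalCone.2 ⟨hx, fun _ _ => le_rfl⟩

theorem mem_of_mem_normalCone (hn : n ∈ normalCone C x) : x ∈ C :=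
  (mem_normalCone.1 hn).1

theorem smul_mem_normalCone {t : ℝ} (ht : 0 ≤ t) (hn : n ∈ normalCone C x) :
    t • n ∈ normalCone C x := by
  obtain ⟨hx, hn⟩ := mem_normalCone.1 hn
  exact mem_normalCone.2 ⟨hx, fun c hc => mul_nonpos_of_nonneg_of_nonpos ht (hn c hc)⟩

end NormalCone

open Classical in
theorem stmt_8_general {X : Type*} [NormedAddCommGroup X] [NormedSpace ℝ X]
    (A : X → Set (X →L[ℝ] ℝ))
    (C : Set X)
    (z : X) (zstar : X →L[ℝ] ℝ)
    (N : X → Set (X →L[ℝ] ℝ))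
    (hN : ∀ x, N x = if x ∈ C then {xstar | ∀ c ∈ C, xstar (c - x) ≤ 0} else ∅)
    (I : X → Set (X →L[ℝ] ℝ))
    (hI : ∀ x, I x = if x ∈ C then {0} else ∅)
    (T : X → Set X)
    (hT : ∀ a, T a = {x : X | ∀ astar ∈ N a, astar x ≤ 0}) :
    (∀ (y : X) (astar nstar : X →L[ℝ] ℝ), astar ∈ A y → nstar ∈ N y →
        0 ≤ (zstar - (astar + nstar)) (z - y))
      ↔ ((∀ (y : X) (astar istar : X →L[ℝ] ℝ), astar ∈ A y → istar ∈ I y →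
            0 ≤ (zstar - (astar + istar)) (z - y))
          ∧ ∀ a, (A a).Nonempty → a ∈ C → z - a ∈ T a) := by
  obtain rfl : N = normalCone C := funext hN
  have hI' : ∀ y istar, istar ∈ I y ↔ y ∈ C ∧ istar = 0 := fun y istar => by
    rw [hI y]; split_ifs with hy <;> simp [hy]
  simp only [hT, Set.mem_ofPred_eq, hI', sub_apply, add_apply]
  constructor
  · intro h
    refine ⟨fun y astar _ ha ⟨hy, hi⟩ => hi ▸ h y astar 0 ha (zero_mem_normalCone hy),
      fun a ⟨astar, ha⟩ _ nstar hn => ?_⟩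
    refine (ContinuousLinearMap.apply ℝ ℝ (z - a)).toLinearMap.nonpos_of_le_of_smul_mem
      (fun t ht _ => smul_mem_normalCone ht) (c := zstar (z - a) - astar (z - a))
      (fun m hm => ?_) hn
    change m (z - a) ≤ _
    linarith [h a astar m ha hm]
  · rintro ⟨hbase, hcone⟩ y astar nstar ha hn
    have hy := mem_of_mem_normalCone hn
    have h0 := hbase y astar 0 ha ⟨hy, rfl⟩
    have hneg := hcone y ⟨astar, ha⟩ hy nstar hn
    simp only [zero_apply] at h0
    linarith

open Classical in
/-- `(z,z*)` is monotonically related to `gra (A + N_C)` iff it is monotonically related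
to `gra (A + I_C)` and `z ∈ a + T_C(a)` for every `a ∈ dom A ∩ C`. -/
theorem stmt_8 {X : Type*} [NormedAddCommGroup X] [NormedSpace ℝ X] [CompleteSpace X]
    (A : X → Set (X →L[ℝ] ℝ))
    (C : Set X) (hCne : C.Nonempty) (hCcl : IsClosed C) (hCcv : Convex ℝ C)
    (z : X) (zstar : X →L[ℝ] ℝ)
    (N : X → Set (X →L[ℝ] ℝ))
    (hN : ∀ x, N x = if x ∈ C then {xstar | ∀ c ∈ C, xstar (c - x) ≤ 0} else ∅)
    (I : X → Set (X →L[ℝ] ℝ))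
    (hI : ∀ x, I x = if x ∈ C then {0} else ∅)
    (T : X → Set X)
    (hT : ∀ a, T a = {x : X | ∀ astar ∈ N a, astar x ≤ 0}) :
    (∀ (y : X) (astar nstar : X →L[ℝ] ℝ), astar ∈ A y → nstar ∈ N y →
        0 ≤ (zstar - (astar + nstar)) (z - y))
      ↔ ((∀ (y : X) (astar istar : X →L[ℝ] ℝ), astar ∈ A y → istar ∈ I y →
            0 ≤ (zstar - (astar + istar)) (z - y))
          ∧ ∀ a, (A a).Nonempty → a ∈ C → z - a ∈ T a) :=
  stmt_8_general A C z zstar N hN I hI T hT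
end

section
/- Let A : X ⇉ X* be a set-valued operator, C ⊆ X nonempty closed convex, and suppose (z,z*) is monotonically related to gra(A + N_C). Then for every a ∈ dom A ∩ C, ⟨z − a, a*⟩ ≤ 0 for all a* ∈ N_C(a), i.e., z − a lies in the tangent cone T_C(a). -/
lemma nonpos_of_forall_nonneg_mul_le {r K : ℝ} (h : ∀ t : ℝ, 0 ≤ t → t * r ≤ K) : r ≤ 0 := by
  by_contra! hr
  have hK := h ((|K| + 1) / r) (by positivity)
  rw [div_mul_cancel₀ _ hr.ne'] at hK
  linarith [le_abs_self K]

lemma smul_mem_normalCone_s9 {X : Type*} [AddCommGroup X] [Module ℝ X] [TopologicalSpace X]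
    {C : Set X} {a : X} {n : X →L[ℝ] ℝ} (hn : ∀ c ∈ C, n (c - a) ≤ 0) {t : ℝ} (ht : 0 ≤ t) :
    ∀ c ∈ C, (t • n) (c - a) ≤ 0 :=
  fun c hc => mul_nonpos_of_nonneg_of_nonpos ht (hn c hc)

open ContinuousLinearMap

open Classical in
theorem stmt_9_general {X : Type*} [NormedAddCommGroup X] [NormedSpace ℝ X]
    (A : X → Set (X →L[ℝ] ℝ))
    (C : Set X)
    (z : X) (zstar : X →L[ℝ] ℝ)
    (N : X → Set (X →L[ℝ] ℝ))
    (hN : ∀ x, N x = if x ∈ C then {xstar | ∀ c ∈ C, xstar (c - x) ≤ 0} else ∅)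
    (hrel : ∀ (y : X) (astar nstar : X →L[ℝ] ℝ), astar ∈ A y → nstar ∈ N y →
      0 ≤ (zstar - (astar + nstar)) (z - y)) :
    ∀ a, (A a).Nonempty → a ∈ C → ∀ astar ∈ N a, astar (z - a) ≤ 0 := by
  rintro a ⟨bstar, hbstar⟩ haC nstar hnstar
  have hNa : N a = {xstar | ∀ c ∈ C, xstar (c - a) ≤ 0} := by rw [hN, if_pos haC]
  rw [hNa] at hnstar
  -- Pairing with the scaled normals `(a, b* + t n*)` bounds `t ⟨z - a, n*⟩` uniformly in `t ≥ 0`.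
  refine nonpos_of_forall_nonneg_mul_le (K := (zstar - bstar) (z - a)) fun t ht => ?_
  have hmono := hrel a bstar (t • nstar) hbstar (hNa ▸ smul_mem_normalCone_s9 hnstar ht)
  simp only [sub_apply, add_apply, smul_apply, smul_eq_mul] at hmono ⊢
  linarith

open Classical in
/-- If `(z,z*)` is monotonically related to `gra (A + N_C)`, then for every
`a ∈ dom A ∩ C`, `⟨z - a, a*⟩ ≤ 0` for all `a* ∈ N_C(a)`. -/
theorem stmt_9 {X : Type*} [NormedAddCommGroup X] [NormedSpace ℝ X] [CompleteSpace X]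
    (A : X → Set (X →L[ℝ] ℝ))
    (C : Set X) (hCne : C.Nonempty) (hCcl : IsClosed C) (hCcv : Convex ℝ C)
    (z : X) (zstar : X →L[ℝ] ℝ)
    (N : X → Set (X →L[ℝ] ℝ))
    (hN : ∀ x, N x = if x ∈ C then {xstar | ∀ c ∈ C, xstar (c - x) ≤ 0} else ∅)
    (hrel : ∀ (y : X) (astar nstar : X →L[ℝ] ℝ), astar ∈ A y → nstar ∈ N y →
      0 ≤ (zstar - (astar + nstar)) (z - y)) :
    ∀ a, (A a).Nonempty → a ∈ C → ∀ astar ∈ N a, astar (z - a) ≤ 0 :=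
  stmt_9_general A C z zstar N hN hrel
end

section
/- Let f, g : X → (−∞,+∞] be proper convex functions on a Banach space X, and suppose there exists x₀ ∈ dom f ∩ dom g such that g is continuous at x₀. Then for every z* ∈ X* there exists y* ∈ X* with (f+g)*(z*) = f*(y*) + g*(z* − y*), i.e., the infimal convolution in the Fenchel duality formula for the conjugate of a sum is exact. -/
/-!
Let `a := (f + g)*(z*)`; the case `a = ⊤` is trivial. On `dom f ∩ dom g` the definition of `a`
says `-g ≤ f - z* + a`. The epigraph of `f - z* + a` and the strict hypograph of `-g` are disjoint
convex subsets of `X × ℝ`, and since `g` is bounded above near `x₀ ∈ dom f`, the second one has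
an interior point `(x₀, m)`, so Hahn–Banach separates them by a closed hyperplane. The hyperplane
passes between `(x₀, m)` and `(x₀, f x₀ - z* x₀ + a)`, so it is not vertical: it is the graph of an
affine function `ℓ + c` with `-g ≤ ℓ + c ≤ f - z* + a`, and `y* := z* + ℓ` gives
`f*(y*) ≤ a - c` and `g*(z* - y*) ≤ c`.
-/

open Filter Topology

theorem ConvexOn.exists_affine_sandwich {E : Type*} [TopologicalSpace E] [AddCommGroup E]
    [Module ℝ E] [IsTopologicalAddGroup E] [ContinuousSMul ℝ E] [LocallyConvexSpace ℝ E]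
    {s t : Set E} {F H : E → ℝ} (hF : ConvexOn ℝ s F) (hH : ConcaveOn ℝ t H)
    (hle : ∀ x ∈ s ∩ t, H x ≤ F x) {x₀ : E} (hx₀ : x₀ ∈ s) {m : ℝ}
    (hm : ∀ᶠ x in 𝓝 x₀, x ∈ t ∧ m ≤ H x) :
    ∃ (ℓ : E →L[ℝ] ℝ) (c : ℝ), (∀ x ∈ t, H x ≤ ℓ x + c) ∧ ∀ x ∈ s, ℓ x + c ≤ F x := by
  set A : Set (E × ℝ) := {p | p.1 ∈ s ∧ F p.1 ≤ p.2}
  set C : Set (E × ℝ) := {p | p.1 ∈ t ∧ p.2 < H p.1}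
  have hA : Convex ℝ A := hF.convex_epigraph
  have hC : Convex ℝ C := hH.convex_strict_hypograph
  have hAC : Disjoint C A := Set.disjoint_left.2 fun p hpC hpA =>
    (hpC.2.trans_le (hle p.1 ⟨hpA.1, hpC.1⟩)).not_ge hpA.2
  have hp₀ : (x₀, m - 1) ∈ interior C := by
    refine mem_interior_iff_mem_nhds.2 (mem_of_superset (prod_mem_nhds hm (Iio_mem_nhds
      (sub_one_lt m))) ?_)
    rintro ⟨x, τ⟩ ⟨⟨hxt, hmx⟩, hτ⟩
    exact ⟨hxt, lt_of_lt_of_le hτ hmx⟩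
  obtain ⟨φ, u, hφC, hφA⟩ :=
    geometric_hahn_banach_open hC.interior isOpen_interior hA (hAC.mono_left interior_subset)
  have hφC' : ∀ p ∈ C, φ p ≤ u := by
    intro p hp
    refine closure_minimal (fun q hq => (hφC q hq).le) (isClosed_Iic.preimage φ.continuous) ?_
    rw [hC.closure_interior_eq_closure_of_nonempty_interior ⟨_, hp₀⟩]
    exact subset_closure hp
  set w : E →L[ℝ] ℝ := φ.comp (.inl ℝ E ℝ)
  set σ : ℝ := φ (0, 1)
  have hφ : ∀ x τ, φ (x, τ) = w x + τ * σ := by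
    intro x τ
    have : ((x, τ) : E × ℝ) = (x, 0) + τ • (0, 1) := by simp
    rw [this, map_add, map_smul, smul_eq_mul, mul_comm]
    rfl
  -- The hyperplane separates `(x₀, m - 1)` from `(x₀, F x₀)`, so it is not vertical.
  have hσ : 0 < σ := by
    have hx₀t : x₀ ∈ t := hm.self_of_nhds.1
    have hlt := (hφC _ hp₀).trans_le (hφA (x₀, F x₀) ⟨hx₀, le_rfl⟩)
    rw [hφ, hφ] at hlt
    have : m - 1 < F x₀ := by linarith [hm.self_of_nhds.2, hle x₀ ⟨hx₀, hx₀t⟩]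
    nlinarith
  refine ⟨-σ⁻¹ • w, u / σ, fun x hx => ?_, fun x hx => ?_⟩
  · refine le_of_forall_lt_imp_le_of_dense fun τ hτ => ?_
    have := hφC' (x, τ) ⟨hx, hτ⟩
    rw [hφ] at this
    simp only [_root_.smul_apply, smul_eq_mul]
    field_simp
    linarith
  · have := hφA (x, F x) ⟨hx, le_rfl⟩
    rw [hφ] at this
    simp only [_root_.smul_apply, smul_eq_mul]
    field_simp
    linarith

theorem ContinuousAt.eventually_ne_top_toReal_lt {X : Type*} [TopologicalSpace X]
    {g : X → EReal} (hg : ∀ x, g x ≠ ⊥) {x₀ : X} (hgc : ContinuousAt g x₀) {M : ℝ}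
    (hM : g x₀ < M) :
    ∀ᶠ x in 𝓝 x₀, g x ≠ ⊤ ∧ (g x).toReal < M := by
  filter_upwards [hgc.eventually_lt continuousAt_const hM] with x hx
  exact ⟨hx.ne_top, EReal.coe_lt_coe_iff.1 ((EReal.coe_toReal_le (hg x)).trans_lt hx)⟩

section FenchelConjugate

variable {X : Type*} [AddCommGroup X] [Module ℝ X]

theorem convexOn_toReal_of_ereal_convex {f : X → EReal} (hf : ∀ x, f x ≠ ⊥)
    (hconv : ∀ x y : X, ∀ lam ∈ Set.Icc (0:ℝ) 1,
      f (lam • x + (1 - lam) • y) ≤ (lam : EReal) * f x + ((1 - lam : ℝ) : EReal) * f y) :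
    ConvexOn ℝ {x | f x ≠ ⊤} fun x => (f x).toReal := by
  have key : ∀ x, f x ≠ ⊤ → ∀ y, f y ≠ ⊤ → ∀ lam ∈ Set.Icc (0:ℝ) 1,
      f (lam • x + (1 - lam) • y) ≤
        ((lam * (f x).toReal + (1 - lam) * (f y).toReal : ℝ) : EReal) := by
    intro x hx y hy lam hlam
    have h := hconv x y lam hlam
    rwa [← EReal.coe_toReal hx (hf x), ← EReal.coe_toReal hy (hf y)] at h
  refine ⟨fun x hx y hy a b ha hb hab => ?_, fun x hx y hy a b ha hb hab => ?_⟩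
  · obtain rfl : b = 1 - a := by linarith
    exact ((key x hx y hy a ⟨ha, by linarith⟩).trans_lt (EReal.coe_lt_top _)).ne
  · obtain rfl : b = 1 - a := by linarith
    exact EReal.coe_le_coe_iff.1 ((EReal.coe_toReal_le (hf _)).trans
      (key x hx y hy a ⟨ha, by linarith⟩))

variable [TopologicalSpace X]

noncomputable def fenchelConj (f : X → EReal) (xstar : X →L[ℝ] ℝ) : EReal :=
  ⨆ x, (xstar x : EReal) - f x

theorem fenchelConj_le_coe_iff {f : X → EReal} (hf : ∀ x, f x ≠ ⊥) {xstar : X →L[ℝ] ℝ}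
    {c : ℝ} :
    fenchelConj f xstar ≤ c ↔ ∀ x, f x ≠ ⊤ → xstar x - (f x).toReal ≤ c := by
  refine iSup_le_iff.trans (forall_congr' fun x => ?_)
  by_cases hx : f x = ⊤
  · simp [hx]
  · rw [← EReal.coe_toReal hx (hf x), ← EReal.coe_sub, EReal.coe_le_coe_iff,
      EReal.toReal_coe, imp_iff_right (EReal.coe_ne_top _)]

theorem coe_sub_toReal_le_fenchelConj {f : X → EReal} {x : X} (hbot : f x ≠ ⊥)
    (htop : f x ≠ ⊤) (xstar : X →L[ℝ] ℝ) :
    ((xstar x - (f x).toReal : ℝ) : EReal) ≤ fenchelConj f xstar := by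
  refine le_iSup_of_le x ?_
  rw [EReal.coe_sub, EReal.coe_toReal htop hbot]

theorem fenchelConj_add_le {f g : X → EReal} (hf : ∀ x, f x ≠ ⊥) (hg : ∀ x, g x ≠ ⊥)
    (ystar zstar : X →L[ℝ] ℝ) :
    fenchelConj (f + g) zstar ≤ fenchelConj f ystar + fenchelConj g (zstar - ystar) := by
  refine iSup_le fun x => ?_
  rw [Pi.add_apply]
  rcases eq_or_ne (f x) ⊤ with hfx | hfx
  · simp [hfx, EReal.top_add_of_ne_bot (hg x)]
  rcases eq_or_ne (g x) ⊤ with hgx | hgx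
  · simp [hgx, EReal.add_top_of_ne_bot (hf x)]
  calc (zstar x : EReal) - (f x + g x)
      = ((ystar x - (f x).toReal : ℝ) : EReal) +
          (((zstar - ystar) x - (g x).toReal : ℝ) : EReal) := by
        lift f x to ℝ using ⟨hfx, hf x⟩ with r₁
        lift g x to ℝ using ⟨hgx, hg x⟩ with r₂
        rw [EReal.toReal_coe, EReal.toReal_coe, sub_apply]
        norm_cast
        ring
    _ ≤ _ := add_le_add (coe_sub_toReal_le_fenchelConj (hf x) hfx ystar)
        (coe_sub_toReal_le_fenchelConj (hg x) hgx (zstar - ystar))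

theorem exists_fenchelConj_add_le_of_fenchelConj_add_le_coe [IsTopologicalAddGroup X]
    [ContinuousSMul ℝ X] [LocallyConvexSpace ℝ X] {f g : X → EReal}
    (hfbot : ∀ x, f x ≠ ⊥) (hgbot : ∀ x, g x ≠ ⊥)
    (hfconv : ∀ x y : X, ∀ lam ∈ Set.Icc (0:ℝ) 1,
      f (lam • x + (1 - lam) • y) ≤ (lam : EReal) * f x + ((1 - lam : ℝ) : EReal) * f y)
    (hgconv : ∀ x y : X, ∀ lam ∈ Set.Icc (0:ℝ) 1,
      g (lam • x + (1 - lam) • y) ≤ (lam : EReal) * g x + ((1 - lam : ℝ) : EReal) * g y)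
    {x₀ : X} (hx₀f : f x₀ ≠ ⊤) {m : ℝ}
    (hgbdd : ∀ᶠ x in 𝓝 x₀, g x ≠ ⊤ ∧ (g x).toReal < m)
    {zstar : X →L[ℝ] ℝ} {a : ℝ} (ha : fenchelConj (f + g) zstar ≤ a) :
    ∃ ystar, fenchelConj f ystar + fenchelConj g (zstar - ystar) ≤ a := by
  have hF := convexOn_toReal_of_ereal_convex hfbot hfconv
  have hsum : ∀ x ∈ {x | f x ≠ ⊤} ∩ {x | g x ≠ ⊤},
      -(g x).toReal ≤ (f x).toReal - zstar x + a := by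
    rintro x ⟨hfx, hgx⟩
    have := (fenchelConj_le_coe_iff fun x => EReal.add_ne_bot_iff.2 ⟨hfbot x, hgbot x⟩).1 ha x
      (EReal.add_ne_top hfx hgx)
    rw [EReal.toReal_add hfx (hfbot x) hgx (hgbot x)] at this
    linarith
  obtain ⟨ℓ, c, hℓg, hℓf⟩ :=
    ((hF.sub (zstar.toLinearMap.concaveOn hF.1)).add_const a).exists_affine_sandwich
      (convexOn_toReal_of_ereal_convex hgbot hgconv).neg hsum hx₀f
      (m := -m) (hgbdd.mono fun x hx => ⟨hx.1, neg_le_neg hx.2.le⟩)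
  refine ⟨zstar + ℓ, ?_⟩
  calc fenchelConj f (zstar + ℓ) + fenchelConj g (zstar - (zstar + ℓ))
      ≤ ((a - c : ℝ) : EReal) + (c : EReal) := by
        refine add_le_add ((fenchelConj_le_coe_iff hfbot).2 fun x hx => ?_)
          ((fenchelConj_le_coe_iff hgbot).2 fun x hx => ?_)
        · have := hℓf x hx
          simp only [ContinuousLinearMap.coe_coe, Pi.add_apply, Pi.sub_apply, add_apply] at this ⊢
          linarith
        · have := hℓg x hx
          simp only [Pi.neg_apply, sub_add_cancel_left, neg_apply] at this ⊢
          linarith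
    _ = a := by rw [← EReal.coe_add, sub_add_cancel]

end FenchelConjugate

theorem stmt_17_general {X : Type*} [NormedAddCommGroup X] [NormedSpace ℝ X]
    (f g : X → EReal)
    (hfbot : ∀ x, f x ≠ ⊥)
    (hgbot : ∀ x, g x ≠ ⊥)
    (hfconv : ∀ x y : X, ∀ lam ∈ Set.Icc (0:ℝ) 1,
      f (lam • x + (1 - lam) • y) ≤ (lam : EReal) * f x + ((1 - lam : ℝ) : EReal) * f y)
    (hgconv : ∀ x y : X, ∀ lam ∈ Set.Icc (0:ℝ) 1,
      g (lam • x + (1 - lam) • y) ≤ (lam : EReal) * g x + ((1 - lam : ℝ) : EReal) * g y)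
    (x₀ : X) (hx₀f : f x₀ ≠ ⊤) (hx₀g : g x₀ ≠ ⊤) (hgcont : ContinuousAt g x₀)
    (conj : (X → EReal) → (X →L[ℝ] ℝ) → EReal)
    (hconj : ∀ (h : X → EReal) (xstar : X →L[ℝ] ℝ),
      conj h xstar = sSup (Set.range fun x => ((xstar x : ℝ) : EReal) - h x)) :
    ∀ zstar : X →L[ℝ] ℝ, ∃ ystar : X →L[ℝ] ℝ,
      conj (fun x => f x + g x) zstar = conj f ystar + conj g (zstar - ystar) := by
  obtain rfl : conj = fenchelConj := funext₂ hconj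
  intro zstar
  by_cases htop : fenchelConj (f + g) zstar = ⊤
  · exact ⟨0, le_antisymm (fenchelConj_add_le hfbot hgbot 0 zstar) (htop ▸ le_top)⟩
  have hbot : fenchelConj (f + g) zstar ≠ ⊥ :=
    ne_bot_of_le_ne_bot (EReal.coe_ne_bot _) (coe_sub_toReal_le_fenchelConj (f := f + g)
      (EReal.add_ne_bot_iff.2 ⟨hfbot x₀, hgbot x₀⟩) (EReal.add_ne_top hx₀f hx₀g) zstar)
  have hgbdd := hgcont.eventually_ne_top_toReal_lt hgbot
    ((EReal.le_coe_toReal hx₀g).trans_lt (EReal.coe_lt_coe_iff.2 (lt_add_one (g x₀).toReal)))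
  obtain ⟨ystar, hle⟩ := exists_fenchelConj_add_le_of_fenchelConj_add_le_coe hfbot hgbot hfconv
    hgconv hx₀f hgbdd (EReal.coe_toReal htop hbot).ge
  rw [EReal.coe_toReal htop hbot] at hle
  exact ⟨ystar, le_antisymm (fenchelConj_add_le hfbot hgbot ystar zstar) hle⟩

/-- Rockafellar: if `f, g` are proper convex and `g` is continuous at some point of
`dom f ∩ dom g`, then for every `z*` the Fenchel conjugate of the sum is an exact
infimal convolution: `(f+g)*(z*) = f*(y*) + g*(z*-y*)` for some `y*`. -/
theorem stmt_17 {X : Type*} [NormedAddCommGroup X] [NormedSpace ℝ X] [CompleteSpace X]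
    (f g : X → EReal)
    (hfbot : ∀ x, f x ≠ ⊥) (hfprop : ∃ x, f x ≠ ⊤)
    (hgbot : ∀ x, g x ≠ ⊥) (hgprop : ∃ x, g x ≠ ⊤)
    (hfconv : ∀ x y : X, ∀ lam ∈ Set.Icc (0:ℝ) 1,
      f (lam • x + (1 - lam) • y) ≤ (lam : EReal) * f x + ((1 - lam : ℝ) : EReal) * f y)
    (hgconv : ∀ x y : X, ∀ lam ∈ Set.Icc (0:ℝ) 1,
      g (lam • x + (1 - lam) • y) ≤ (lam : EReal) * g x + ((1 - lam : ℝ) : EReal) * g y)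
    (x₀ : X) (hx₀f : f x₀ ≠ ⊤) (hx₀g : g x₀ ≠ ⊤) (hgcont : ContinuousAt g x₀)
    (conj : (X → EReal) → (X →L[ℝ] ℝ) → EReal)
    (hconj : ∀ (h : X → EReal) (xstar : X →L[ℝ] ℝ),
      conj h xstar = sSup (Set.range fun x => ((xstar x : ℝ) : EReal) - h x)) :
    ∀ zstar : X →L[ℝ] ℝ, ∃ ystar : X →L[ℝ] ℝ,
      conj (fun x => f x + g x) zstar = conj f ystar + conj g (zstar - ystar) :=
  stmt_17_general f g hfbot hgbot hfconv hgconv x₀ hx₀f hx₀g hgcont conj hconj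
end
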